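/- Let M be a metric space, I : M → M a distance-preserving map, p ∈ M, and n ∈ ℕ, and suppose the set O_n = {I^i(p) : i = 0, ..., n} has at least two elements. Set r = nnd(I^{⌊n/2⌋}(p), O_n) and let S = { I^j(p) : ⌈n/2⌉ < j ≤ n and dist(p, I^j(p)) < r }. Then S is contained in the open ball of radius r around p, any two distinct points of S are at distance at least r from each other, and |NND(O_n)| ≤ |S| + 1. -/

import Mathlib

/-- The nearest neighbor distance of `x` in `X`. -/
noncomputable def nnd {M : Type*} [MetricSpace M] (x : M) (X : Set M) : ℝ :=
  sInf (dist x '' (X \ {x}))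

/-- The set of nearest neighbor distances of a set `X`. -/
noncomputable def NND {M : Type*} [MetricSpace M] (X : Set M) : Set ℝ :=
  (fun x => nnd x X) '' X

/-!
An isometry moves all points of the orbit alike: `dist (I^a p) (I^b p) = dist p (I^(b-a) p)` for
`a ≤ b`. From the middle point `I^⌊n/2⌋ p` every shift `d ≤ ⌈n/2⌉` is realised inside `O_n`,
and such a shift is realised from every other point of `O_n` as well. The shift realising `r`
therefore shows that every nearest neighbour distance is at most `r`, while a nearest neighbour
distance smaller than `r` must come from a shift `d > ⌈n/2⌉`, i.e. equal `dist p q` for a `q ∈ S`.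
Two points of `S` differ by a shift smaller than `⌈n/2⌉`, so they are at least `r` apart.
-/

open Function Set

section Iterate

variable {α : Type*} [PseudoMetricSpace α] {f : α → α}

protected theorem Isometry.iterate (hf : Isometry f) : ∀ n : ℕ, Isometry f^[n]
  | 0 => isometry_id
  | n + 1 => by rw [iterate_succ']; exact hf.comp (hf.iterate n)

theorem Isometry.dist_iterate_iterate (hf : Isometry f) (x : α) {a b : ℕ} (hab : a ≤ b) :
    dist (f^[a] x) (f^[b] x) = dist x (f^[b - a] x) := by
  rw [← Nat.add_sub_cancel' hab, iterate_add_apply, Nat.add_sub_cancel_left]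
  exact (hf.iterate a).dist_eq _ _

theorem Isometry.exists_dist_iterate_eq (hf : Isometry f) (x : α) {n i j : ℕ} (hj : j ≤ n) :
    ∃ d, (d ≤ i ∨ i + d ≤ n) ∧ dist (f^[i] x) (f^[j] x) = dist x (f^[d] x) := by
  rcases le_total i j with hij | hji
  · exact ⟨j - i, by omega, hf.dist_iterate_iterate x hij⟩
  · exact ⟨i - j, by omega, by rw [dist_comm, hf.dist_iterate_iterate x hji]⟩

theorem Isometry.exists_iterate_dist_eq (hf : Isometry f) (x : α) {n i d : ℕ} (hi : i ≤ n)
    (hd : d ≤ i ∨ i + d ≤ n) : ∃ j ≤ n, dist (f^[i] x) (f^[j] x) = dist x (f^[d] x) := by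
  rcases le_or_gt d i with hdi | hid
  · refine ⟨i - d, by omega, ?_⟩
    rw [dist_comm, hf.dist_iterate_iterate x (Nat.sub_le i d), Nat.sub_sub_self hdi]
  · exact ⟨i + d, by omega, by rw [hf.dist_iterate_iterate x (by omega), Nat.add_sub_cancel_left]⟩

end Iterate

section NearestNeighbor

variable {M : Type*} [MetricSpace M] {X : Set M} {x y : M}

theorem nnd_le_dist (hX : X.Finite) (hy : y ∈ X) (hyx : y ≠ x) : nnd x X ≤ dist x y :=
  csInf_le ((hX.sdiff).image _).bddBelow ⟨y, ⟨hy, hyx⟩, rfl⟩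

theorem Set.Finite.exists_nnd_eq_dist (hX : X.Finite) (hx : (X \ {x}).Nonempty) :
    ∃ y ∈ X, y ≠ x ∧ nnd x X = dist x y := by
  obtain ⟨y, ⟨hy, hyx⟩, h⟩ := (hx.image (dist x)).csInf_mem ((hX.sdiff).image _)
  exact ⟨y, hy, hyx, h.symm⟩

end NearestNeighbor

def orbitSegment {α : Type*} (f : α → α) (x : α) (n : ℕ) : Set α :=
  {y | ∃ i, i ≤ n ∧ y = f^[i] x}

theorem orbitSegment_finite {α : Type*} (f : α → α) (x : α) (n : ℕ) :
    (orbitSegment f x n).Finite :=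
  ((finite_Iic n).image fun i => f^[i] x).subset fun _ ⟨i, hi, hy⟩ => ⟨i, hi, hy.symm⟩

section OrbitSegment

variable {M : Type*} [MetricSpace M] {f : M → M} {x : M} {n : ℕ}

theorem exists_nnd_orbitSegment_eq (hf : Isometry f) (hO : (orbitSegment f x n).Nontrivial)
    (i : ℕ) : ∃ d, (d ≤ i ∨ i + d ≤ n) ∧ f^[d] x ≠ x ∧
      nnd (f^[i] x) (orbitSegment f x n) = dist x (f^[d] x) := by
  obtain ⟨y, ⟨j, hj, rfl⟩, hne, hy⟩ :=
    (orbitSegment_finite f x n).exists_nnd_eq_dist (hO.exists_ne (f^[i] x))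
  obtain ⟨d, hd, hdist⟩ := hf.exists_dist_iterate_eq x (i := i) hj
  refine ⟨d, hd, fun hdx => hne ?_, hy.trans hdist⟩
  rw [← dist_eq_zero, dist_comm, hdist, hdx, dist_self]

theorem nnd_orbitSegment_middle_le_dist (hf : Isometry f) {j k : ℕ} (hjk : j ≤ k)
    (hkj : k ≤ j + (n + 1) / 2) (hne : f^[j] x ≠ f^[k] x) :
    nnd (f^[n / 2] x) (orbitSegment f x n) ≤ dist (f^[j] x) (f^[k] x) := by
  obtain ⟨l, hl, hdist⟩ := hf.exists_iterate_dist_eq x (n.div_le_self 2) (d := k - j) (by omega)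
  rw [hf.dist_iterate_iterate x hjk, ← hdist]
  refine nnd_le_dist (orbitSegment_finite f x n) ⟨l, hl, rfl⟩ fun h => hne ?_
  rw [← dist_eq_zero, hf.dist_iterate_iterate x hjk, ← hdist, h, dist_self]

theorem nnd_orbitSegment_le_middle (hf : Isometry f) (hO : (orbitSegment f x n).Nontrivial)
    {i : ℕ} (hi : i ≤ n) :
    nnd (f^[i] x) (orbitSegment f x n) ≤ nnd (f^[n / 2] x) (orbitSegment f x n) := by
  obtain ⟨d, hd, hdx, hmid⟩ := exists_nnd_orbitSegment_eq hf hO (n / 2)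
  obtain ⟨j, hj, hdist⟩ := hf.exists_iterate_dist_eq x hi (d := d) (by omega)
  rw [hmid, ← hdist]
  refine nnd_le_dist (orbitSegment_finite f x n) ⟨j, hj, rfl⟩ fun h => hdx ?_
  rw [← dist_eq_zero, dist_comm, ← hdist, h, dist_self]

end OrbitSegment

/-- For an orbit segment `O_n = {I^i(p) : i = 0, …, n}` of an isometry with at least two
elements, let `r = nnd(I^{⌊n/2⌋}(p), O_n)` and
`S = {I^j(p) : ⌈n/2⌉ < j ≤ n, dist(p, I^j(p)) < r}`.  Then `S` lies in the open `r`-ball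
around `p`, distinct points of `S` are at distance at least `r` apart, and
`|NND(O_n)| ≤ |S| + 1`. -/
theorem nnd_orbit_packing {M : Type*} [MetricSpace M]
    (I : M → M) (hI : Isometry I) (p : M) (n : ℕ)
    (O : Set M) (hO : O = {x | ∃ i : ℕ, i ≤ n ∧ x = I^[i] p})
    (h2 : O.Nontrivial)
    (r : ℝ) (hr : r = nnd (I^[n / 2] p) O)
    (S : Set M)
    (hS : S = {x | ∃ j : ℕ, (n + 1) / 2 < j ∧ j ≤ n ∧ dist p (I^[j] p) < r ∧ x = I^[j] p}) :
    S ⊆ Metric.ball p r ∧ (S.Pairwise fun x y => r ≤ dist x y) ∧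
      (NND O).encard ≤ S.encard + 1 := by
  obtain rfl : O = orbitSegment I p n := hO
  have hmiddle {j k : ℕ} (hjk : j ≤ k) (hkj : k ≤ j + (n + 1) / 2) (hne : I^[j] p ≠ I^[k] p) :
      r ≤ dist (I^[j] p) (I^[k] p) :=
    hr ▸ nnd_orbitSegment_middle_le_dist hI hjk hkj hne
  refine ⟨?_, ?_, ?_⟩
  · rw [hS]
    exact fun _ ⟨j, _, _, hj, hy⟩ => hy ▸ Metric.mem_ball'.2 hj
  · rw [hS]
    rintro _ ⟨j, hj, hjn, -, rfl⟩ _ ⟨k, hk, hkn, -, rfl⟩ hne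
    rcases le_total j k with hjk | hkj
    · exact hmiddle hjk (by omega) hne
    · rw [dist_comm]; exact hmiddle hkj (by omega) hne.symm
  · have hNND : NND (orbitSegment I p n) ⊆ insert r (dist p '' S) := by
      rintro _ ⟨_, ⟨i, hi, rfl⟩, rfl⟩
      obtain ⟨d, hd, hdp, hnnd⟩ := exists_nnd_orbitSegment_eq hI h2 i
      rcases (hr ▸ nnd_orbitSegment_le_middle hI h2 hi).eq_or_lt with heq | hlt
      · exact .inl heq
      have hdn : (n + 1) / 2 < d := by
        by_contra! hdn
        have := hmiddle (Nat.zero_le d) (by omega) hdp.symm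
        rw [iterate_zero_apply] at this
        linarith
      exact .inr ⟨_, hS ▸ ⟨d, hdn, by omega, hnnd ▸ hlt, rfl⟩, hnnd.symm⟩
    calc (NND _).encard ≤ (insert r (dist p '' S)).encard := encard_mono hNND
      _ ≤ (dist p '' S).encard + 1 := encard_insert_le _ _
      _ ≤ _ := add_le_add_left (encard_image_le _ _) 1
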